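/- arXiv:2304.08198 — 4 statements merged into one kernel-verified Lean document; each statement's English description precedes it below -/
import Mathlib

section
/- Let Z be a nonempty finite index set, and for each p ∈ Z let ℓ_p and m_p be nonnegative integers. Let d₊, d₋ be integers satisfying d₊ + d₋ + Σ_{p∈Z} ℓ_p = 0, d₊ ≤ d₋, d₊ < 0 and d₋ < 0. For a real number c define χ_p(c) = min{ℓ_p, (m_p + 1)·c + ℓ_p/2}. Then there exists a unique real number c ≥ 0 such that d₊ + Σ_{p∈Z} χ_p(c) = 0, and for this c one also has d₋ + Σ_{p∈Z} (ℓ_p − χ_p(c)) = 0. -/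
open Finset

/-!
The function `c ↦ Σ_p min ℓ_p (s_p c + ℓ_p / 2)` is continuous and nondecreasing, equals
`Σ ℓ / 2 ≤ -d₊` at `c = 0` and `Σ ℓ = -d₊ - d₋ > -d₊` at `c = Σ ℓ`, so the intermediate value
theorem gives a root of `d₊ + Σ_p χ_p`. Below the cap `Σ ℓ` some summand is still on its linear
branch, so the function is strictly increasing there, which makes the root unique.
-/

section ChiSum

variable {Z : Type*} [Fintype Z]

/-- The paper's `Σ_p χ_p(c)`, with slopes `s p = m_p + 1`. -/
noncomputable def chiSum (ℓ s : Z → ℝ) (c : ℝ) : ℝ :=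
  ∑ p, min (ℓ p) (s p * c + ℓ p / 2)

variable (ℓ s : Z → ℝ)

theorem continuous_chiSum : Continuous (chiSum ℓ s) := by
  unfold chiSum
  fun_prop

variable {ℓ s}

theorem chiSum_zero (hℓ : ∀ p, 0 ≤ ℓ p) : chiSum ℓ s 0 = (∑ p, ℓ p) / 2 := by
  rw [chiSum, sum_div]
  refine sum_congr rfl fun p _ => ?_
  rw [mul_zero, zero_add, min_eq_right (by linarith [hℓ p])]

theorem chiSum_sum_self (hℓ : ∀ p, 0 ≤ ℓ p) (hs : ∀ p, 1 ≤ s p) :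
    chiSum ℓ s (∑ p, ℓ p) = ∑ p, ℓ p := by
  refine sum_congr rfl fun p _ => min_eq_left ?_
  have hℓS : ℓ p ≤ ∑ q, ℓ q := single_le_sum (fun q _ => hℓ q) (mem_univ p)
  nlinarith [hℓ p, hs p]

theorem chiSum_lt_chiSum (hs : ∀ p, 0 < s p) {a b : ℝ} (hab : a < b)
    (hb : chiSum ℓ s b < ∑ p, ℓ p) : chiSum ℓ s a < chiSum ℓ s b := by
  obtain ⟨q, -, hq⟩ := exists_lt_of_sum_lt hb
  have hlinear : s q * b + ℓ q / 2 < ℓ q := by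
    simpa only [min_lt_iff, lt_irrefl, false_or] using hq
  refine sum_lt_sum (fun p _ => by have := (hs p).le; gcongr) ⟨q, mem_univ q, ?_⟩
  calc min (ℓ q) (s q * a + ℓ q / 2) ≤ s q * a + ℓ q / 2 := min_le_right _ _
    _ < s q * b + ℓ q / 2 := by gcongr; exact hs q
    _ = min (ℓ q) (s q * b + ℓ q / 2) := (min_eq_right hlinear.le).symm

theorem eq_of_chiSum_eq (hs : ∀ p, 0 < s p) {a b : ℝ} (h : chiSum ℓ s a = chiSum ℓ s b)
    (hb : chiSum ℓ s b < ∑ p, ℓ p) : a = b := by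
  rcases lt_trichotomy a b with hab | hab | hab
  · exact absurd h (chiSum_lt_chiSum hs hab hb).ne
  · exact hab
  · exact absurd h (chiSum_lt_chiSum hs hab (h ▸ hb)).ne'

end ChiSum

theorem exists_unique_weight_constant_general
    (Z : Type*) [Fintype Z]
    (ℓ m : Z → ℕ) (dp dm : ℤ)
    (hsum : dp + dm + ∑ p, (ℓ p : ℤ) = 0)
    (hle : dp ≤ dm) (hdm : dm < 0) :
    (∃! c : ℝ, 0 ≤ c ∧
        (dp : ℝ) + ∑ p, min (ℓ p : ℝ) (((m p : ℝ) + 1) * c + (ℓ p : ℝ) / 2) = 0) ∧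
    (∀ c : ℝ, 0 ≤ c →
        (dp : ℝ) + ∑ p, min (ℓ p : ℝ) (((m p : ℝ) + 1) * c + (ℓ p : ℝ) / 2) = 0 →
        (dm : ℝ) + ∑ p, ((ℓ p : ℝ) - min (ℓ p : ℝ) (((m p : ℝ) + 1) * c + (ℓ p : ℝ) / 2)) = 0) := by
  set χ := chiSum (fun p => (ℓ p : ℝ)) (fun p => (m p : ℝ) + 1)
  set S := ∑ p, (ℓ p : ℝ)
  have hsumR : (dp : ℝ) + dm + S = 0 := by simpa [S] using congr_arg (Int.cast (R := ℝ)) hsum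
  have hleR : (dp : ℝ) ≤ dm := by exact_mod_cast hle
  have hdmR : (dm : ℝ) < 0 := by exact_mod_cast hdm
  have hℓ : ∀ p, (0 : ℝ) ≤ ℓ p := fun p => Nat.cast_nonneg _
  have hs : ∀ p, (1 : ℝ) ≤ (m p : ℝ) + 1 := fun p => by simp
  have hspos : ∀ p, (0 : ℝ) < (m p : ℝ) + 1 := fun p => by positivity
  obtain ⟨c, hcS, hc⟩ : ∃ c ∈ Set.Icc 0 S, χ c = -dp := by
    refine intermediate_value_Icc (sum_nonneg fun p _ => hℓ p)
      (continuous_chiSum _ _).continuousOn ⟨?_, ?_⟩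
    · rw [chiSum_zero hℓ]; linarith
    · rw [chiSum_sum_self hℓ hs]; linarith
  refine ⟨⟨c, ⟨hcS.1, by change (dp : ℝ) + χ c = 0; linarith⟩, fun y ⟨_, hy⟩ => ?_⟩,
    fun y _ hy => ?_⟩
  · change (dp : ℝ) + χ y = 0 at hy
    exact eq_of_chiSum_eq hspos (a := y) (by linarith) (by linarith)
  · rw [sum_sub_distrib]
    linarith

/-- Mochizuki's weight lemma: with `χ_p(c) = min (ℓ_p) ((m_p+1)·c + ℓ_p/2)`, under the
stability hypotheses there is a unique `c ≥ 0` with `d₊ + Σ_p χ_p(c) = 0`, and for this `c`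
also `d₋ + Σ_p (ℓ_p − χ_p(c)) = 0`. -/
theorem exists_unique_weight_constant
    (Z : Type*) [Fintype Z] [Nonempty Z]
    (ℓ m : Z → ℕ) (dp dm : ℤ)
    (hsum : dp + dm + ∑ p, (ℓ p : ℤ) = 0)
    (hle : dp ≤ dm) (hdp : dp < 0) (hdm : dm < 0) :
    (∃! c : ℝ, 0 ≤ c ∧
        (dp : ℝ) + ∑ p, min (ℓ p : ℝ) (((m p : ℝ) + 1) * c + (ℓ p : ℝ) / 2) = 0) ∧
    (∀ c : ℝ, 0 ≤ c →
        (dp : ℝ) + ∑ p, min (ℓ p : ℝ) (((m p : ℝ) + 1) * c + (ℓ p : ℝ) / 2) = 0 →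
        (dm : ℝ) + ∑ p, ((ℓ p : ℝ) - min (ℓ p : ℝ) (((m p : ℝ) + 1) * c + (ℓ p : ℝ) / 2)) = 0) :=
  exists_unique_weight_constant_general Z ℓ m dp dm hsum hle hdm
end

section
/- Let ℂ[[t]] be the ring of formal power series over ℂ, let n ≥ 1 be an integer, let R = {f ∈ ℂ[[t]] : the coefficient of t^i in f vanishes for every odd i with i < 2n+1}, and for odd k with 1 ≤ k ≤ 2n+1 let M_k = R + R·t^k ⊆ ℂ[[t]]. Then the conductor C(M_k) = {u ∈ ℂ[[t]] : u·g ∈ M_k for every g ∈ ℂ[[t]]} equals the ideal of ℂ[[t]] generated by t^{k−1}, and the quotient ℂ[[t]] / C(M_k) is a ℂ-vector space of dimension k − 1. -/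
/-- `R = ℂ[[t², t^{2n+1}]]` as a ℂ-subspace of `ℂ[[t]]`. -/
noncomputable def A2nRing (n : ℕ) : Submodule ℂ (PowerSeries ℂ) where
  carrier := {f : PowerSeries ℂ | ∀ i : ℕ, Odd i → i < 2 * n + 1 → PowerSeries.coeff i f = 0}
  add_mem' := by
    intro a b ha hb
    simp only [Set.mem_setOf_eq] at *
    intro i hi hlt
    rw [map_add, ha i hi hlt, hb i hi hlt, add_zero]
  zero_mem' := by
    simp only [Set.mem_setOf_eq]
    intro i hi hlt
    simp
  smul_mem' := by
    intro c f hf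
    simp only [Set.mem_setOf_eq] at *
    intro i hi hlt
    rw [map_smul, hf i hi hlt, smul_zero]

/-- The module `M_k = R + R·t^k` as a ℂ-subspace of `ℂ[[t]]`. -/
noncomputable def A2nModule (n k : ℕ) : Submodule ℂ (PowerSeries ℂ) :=
  A2nRing n ⊔ (A2nRing n).map (LinearMap.mulRight ℂ (PowerSeries.X ^ k))

/-- The conductor `C(M_k) = {u ∈ ℂ[[t]] : u·g ∈ M_k for all g ∈ ℂ[[t]]}`
as a ℂ-subspace of `ℂ[[t]]`. -/
noncomputable def A2nConductor (n k : ℕ) : Submodule ℂ (PowerSeries ℂ) where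
  carrier := {u : PowerSeries ℂ | ∀ g : PowerSeries ℂ, u * g ∈ A2nModule n k}
  add_mem' := by
    intro a b ha hb
    simp only [Set.mem_setOf_eq] at *
    intro g
    rw [add_mul]
    exact (A2nModule n k).add_mem (ha g) (hb g)
  zero_mem' := by
    simp only [Set.mem_setOf_eq]
    intro g
    rw [zero_mul]
    exact (A2nModule n k).zero_mem
  smul_mem' := by
    intro c u hu
    simp only [Set.mem_setOf_eq] at *
    intro g
    rw [smul_mul_assoc]
    exact (A2nModule n k).smul_mem c (hu g)

/-!
Since `k ≤ 2n + 1`, a series lies in `M_k` exactly when it has no odd-degree terms below `t^k`: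
its odd terms of degree at least `k` form `t^k·b` with `b` even, hence in `R`, and the rest is in
`R`. So `u` lies in the conductor iff neither `u` nor `t·u` has odd terms below `t^k`, that is,
iff `u` has no terms below `t^{k-1}`, as `k - 1` is even.
-/
namespace PowerSeries

variable {R : Type*} [CommRing R]

noncomputable def coeffsBelow (m : ℕ) : R⟦X⟧ →ₗ[R] Fin m → R :=
  LinearMap.pi fun i => coeff i

theorem coeffsBelow_surjective (m : ℕ) : Function.Surjective (coeffsBelow (R := R) m) := by
  intro v
  refine ⟨mk fun i => if h : i < m then v ⟨i, h⟩ else 0, funext fun i => ?_⟩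
  simp [coeffsBelow, i.isLt]

theorem ker_coeffsBelow (m : ℕ) :
    LinearMap.ker (coeffsBelow (R := R) m) = (Ideal.span {X ^ m} : Ideal R⟦X⟧).restrictScalars R := by
  ext φ
  simp only [LinearMap.mem_ker, Submodule.restrictScalars_mem, Ideal.mem_span_singleton,
    X_pow_dvd_iff, funext_iff, Fin.forall_iff]
  rfl

noncomputable def quotientSpanXPowEquiv (m : ℕ) :
    (R⟦X⟧ ⧸ (Ideal.span {X ^ m} : Ideal R⟦X⟧).restrictScalars R) ≃ₗ[R] (Fin m → R) :=
  (Submodule.quotEquivOfEq _ _ (ker_coeffsBelow m).symm).trans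
    ((coeffsBelow m).quotKerEquivOfSurjective (coeffsBelow_surjective m))

end PowerSeries

open PowerSeries

theorem mem_A2nModule_iff {n k : ℕ} (hodd : Odd k) (hk : k ≤ 2 * n + 1) (f : PowerSeries ℂ) :
    f ∈ A2nModule n k ↔ ∀ i, Odd i → i < k → coeff i f = 0 := by
  constructor
  · rintro hf i hi hik
    obtain ⟨a, ha, _, ⟨b, -, rfl⟩, rfl⟩ := Submodule.mem_sup.1 hf
    rw [LinearMap.mulRight_apply, map_add, ha i hi (hik.trans_le hk), coeff_mul_X_pow',
      if_neg (by omega), add_zero]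
  · intro hf
    set b : PowerSeries ℂ := mk fun j => if Even j then coeff (k + j) f else 0
    have hb : b ∈ A2nRing n := fun j hj _ => by simp [b, Nat.not_even_iff_odd.2 hj]
    have ha : f - b * X ^ k ∈ A2nRing n := by
      intro i hi _
      rw [map_sub, coeff_mul_X_pow']
      split_ifs with hki
      · simp [b, Nat.Odd.sub_odd hi hodd, Nat.add_sub_cancel' hki]
      · rw [hf i hi (by omega), sub_zero]
    rw [← sub_add_cancel f (b * X ^ k)]
    exact Submodule.add_mem_sup ha ⟨b, hb, rfl⟩

theorem mem_A2nConductor_iff {n k : ℕ} (hodd : Odd k) (hk : k ≤ 2 * n + 1) (u : PowerSeries ℂ) :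
    u ∈ A2nConductor n k ↔ X ^ (k - 1) ∣ u := by
  have hkeven : Even (k - 1) := Nat.Odd.sub_odd hodd odd_one
  constructor
  · intro hu
    rw [X_pow_dvd_iff]
    intro m hm
    rcases Nat.even_or_odd m with hm_even | hm_odd
    · simpa [coeff_mul_X_pow', mul_comm] using (mem_A2nModule_iff hodd hk _).1 (hu X) (m + 1)
        hm_even.add_one (by omega)
    · simpa using (mem_A2nModule_iff hodd hk _).1 (hu 1) m hm_odd (by omega)
  · rintro ⟨v, rfl⟩ g
    rw [mem_A2nModule_iff hodd hk, mul_assoc]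
    intro i hi hik
    have : i < k - 1 := by
      rcases (Nat.le_sub_one_of_lt hik).lt_or_eq with h | rfl
      exacts [h, absurd hkeven (Nat.not_even_iff_odd.2 hi)]
    exact X_pow_dvd_iff.1 (dvd_mul_right _ _) i this

theorem A2n_conductor_eq_general (n k : ℕ) (hodd : Odd k)
    (hk2 : k ≤ 2 * n + 1) :
    (A2nConductor n k : Set (PowerSeries ℂ))
        = ((Ideal.span {PowerSeries.X ^ (k - 1)} : Ideal (PowerSeries ℂ)) :
            Set (PowerSeries ℂ)) ∧
    FiniteDimensional ℂ (PowerSeries ℂ ⧸ A2nConductor n k) ∧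
    Module.finrank ℂ (PowerSeries ℂ ⧸ A2nConductor n k) = k - 1 := by
  have hC : A2nConductor n k = (Ideal.span {X ^ (k - 1)}).restrictScalars ℂ := by
    ext u
    rw [mem_A2nConductor_iff hodd hk2, Submodule.restrictScalars_mem, Ideal.mem_span_singleton]
  have e : (PowerSeries ℂ ⧸ A2nConductor n k) ≃ₗ[ℂ] (Fin (k - 1) → ℂ) :=
    (Submodule.quotEquivOfEq _ _ hC).trans (quotientSpanXPowEquiv (k - 1))
  refine ⟨congrArg SetLike.coe hC, Module.Finite.equiv e.symm, ?_⟩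
  rw [e.finrank_eq, Module.finrank_fin_fun]

/-- For odd `k`, `1 ≤ k ≤ 2n+1`, the conductor `C(M_k)` is the ideal of `ℂ[[t]]`
generated by `t^{k−1}`, and `ℂ[[t]] / C(M_k)` has ℂ-dimension `k − 1`. -/
theorem A2n_conductor_eq (n k : ℕ) (hn : 1 ≤ n) (hodd : Odd k) (hk1 : 1 ≤ k)
    (hk2 : k ≤ 2 * n + 1) :
    (A2nConductor n k : Set (PowerSeries ℂ))
        = ((Ideal.span {PowerSeries.X ^ (k - 1)} : Ideal (PowerSeries ℂ)) :
            Set (PowerSeries ℂ)) ∧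
    FiniteDimensional ℂ (PowerSeries ℂ ⧸ A2nConductor n k) ∧
    Module.finrank ℂ (PowerSeries ℂ ⧸ A2nConductor n k) = k - 1 :=
  A2n_conductor_eq_general n k hodd hk2
end

section
/- Let ℂ[[t]] be the ring of formal power series over ℂ, let n ≥ 1 be an integer, let R = {(f, g) ∈ ℂ[[t]] × ℂ[[t]] : the coefficients of t^i in f and in g agree for every i < n}, and for 0 ≤ k ≤ n let M_k = R + R·(t^k, 0) ⊆ ℂ[[t]] × ℂ[[t]]. Then the quotient ℂ-vector space M_k / R is finite dimensional of dimension n − k. -/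
/-!
Membership in `R = A2nm1Ring n` says `t^n ∣ f.1 - f.2`, so adding `R·(t^k, 0)` just weakens this
to `t^k ∣ f.1 - f.2`: `M_k = A2nm1Ring k`. On `M_k`, the coefficients of `t^k, …, t^(n-1)` in
`f.1 - f.2` give a surjection onto `ℂ^(n-k)` with kernel `R`.
-/

/-- `R`, the complete local ring of an `A_{2n−1}` singularity, as a ℂ-subspace of its
normalization `ℂ[[t]] × ℂ[[t]]`. -/
noncomputable def A2nm1Ring (n : ℕ) : Submodule ℂ (PowerSeries ℂ × PowerSeries ℂ) where
  carrier := {f : PowerSeries ℂ × PowerSeries ℂ |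
    ∀ i : ℕ, i < n → PowerSeries.coeff i f.1 = PowerSeries.coeff i f.2}
  add_mem' := by
    intro a b ha hb
    simp only [Set.mem_setOf_eq] at *
    intro i hlt
    simp only [Prod.fst_add, Prod.snd_add, map_add, ha i hlt, hb i hlt]
  zero_mem' := by
    simp only [Set.mem_setOf_eq]
    intro i hlt
    simp
  smul_mem' := by
    intro c f hf
    simp only [Set.mem_setOf_eq] at *
    intro i hlt
    simp only [Prod.smul_fst, Prod.smul_snd, map_smul, hf i hlt]

/-- The module `M_k = R + R·(t^k, 0)` as a ℂ-subspace of `ℂ[[t]] × ℂ[[t]]`. -/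
noncomputable def A2nm1Module (n k : ℕ) : Submodule ℂ (PowerSeries ℂ × PowerSeries ℂ) :=
  A2nm1Ring n ⊔ (A2nm1Ring n).map (LinearMap.mulRight ℂ ((PowerSeries.X ^ k, 0) :
    PowerSeries ℂ × PowerSeries ℂ))

namespace A2nm1

open PowerSeries

lemma mem_ring_iff_X_pow_dvd {n : ℕ} {f : PowerSeries ℂ × PowerSeries ℂ} :
    f ∈ A2nm1Ring n ↔ X ^ n ∣ f.1 - f.2 := by
  simp only [X_pow_dvd_iff, map_sub, sub_eq_zero]
  rfl

lemma diagonal_mem_ring (n : ℕ) (c : PowerSeries ℂ) : (c, c) ∈ A2nm1Ring n :=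
  mem_ring_iff_X_pow_dvd.2 (by simp)

lemma module_eq_ring {n k : ℕ} (hk : k ≤ n) : A2nm1Module n k = A2nm1Ring k := by
  ext x
  simp only [A2nm1Module, Submodule.mem_sup, Submodule.mem_map, LinearMap.mulRight_apply]
  constructor
  · rintro ⟨a, ha, _, ⟨m, -, rfl⟩, rfl⟩
    rw [mem_ring_iff_X_pow_dvd] at ha ⊢
    have hdiff : (a + m * (X ^ k, 0)).1 - (a + m * (X ^ k, 0)).2 = (a.1 - a.2) + m.1 * X ^ k := by
      simp only [Prod.fst_add, Prod.snd_add, Prod.fst_mul, Prod.snd_mul, mul_zero]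
      ring
    rw [hdiff]
    exact dvd_add ((pow_dvd_pow X hk).trans ha) (dvd_mul_left _ _)
  · intro hx
    obtain ⟨c, hc⟩ := mem_ring_iff_X_pow_dvd.1 hx
    refine ⟨(x.2, x.2), diagonal_mem_ring n _, _, ⟨(c, c), diagonal_mem_ring n c, rfl⟩, ?_⟩
    refine Prod.ext ?_ (by simp)
    simp only [Prod.fst_add, Prod.fst_mul]
    linear_combination -hc

noncomputable def coeffDiff (n k : ℕ) :
    (PowerSeries ℂ × PowerSeries ℂ) →ₗ[ℂ] (Fin (n - k) → ℂ) :=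
  (LinearMap.pi fun j : Fin (n - k) ↦ coeff (k + j)) ∘ₗ
    (LinearMap.fst ℂ _ _ - LinearMap.snd ℂ _ _)

lemma coeffDiff_apply (n k : ℕ) (f : PowerSeries ℂ × PowerSeries ℂ) (j : Fin (n - k)) :
    coeffDiff n k f j = coeff (k + j) f.1 - coeff (k + j) f.2 := by
  simp [coeffDiff]

lemma ker_coeffDiff_restrict (n k : ℕ) :
    LinearMap.ker (coeffDiff n k ∘ₗ (A2nm1Ring k).subtype) =
      (A2nm1Ring n).comap (A2nm1Ring k).subtype := by
  ext ⟨f, hf⟩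
  simp only [LinearMap.mem_ker, LinearMap.comp_apply, Submodule.mem_comap,
    Submodule.subtype_apply, funext_iff, coeffDiff_apply, Pi.zero_apply, sub_eq_zero]
  constructor
  · intro h i hi
    by_cases hik : i < k
    · exact hf i hik
    · simpa [Nat.add_sub_cancel' (not_lt.1 hik)] using h ⟨i - k, by omega⟩
  · exact fun h j ↦ h _ (by omega)

lemma coeffDiff_restrict_surjective (n k : ℕ) :
    Function.Surjective (coeffDiff n k ∘ₗ (A2nm1Ring k).subtype) := by
  intro v
  set g : PowerSeries ℂ := ∑ j : Fin (n - k), monomial (k + j) (v j)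
  have hg : ((g, 0) : PowerSeries ℂ × PowerSeries ℂ) ∈ A2nm1Ring k := by
    intro i hi
    simp only [g, map_sum, coeff_monomial, map_zero]
    exact Finset.sum_eq_zero fun j _ ↦ if_neg (by omega)
  refine ⟨⟨(g, 0), hg⟩, funext fun j ↦ ?_⟩
  simp [coeffDiff_apply, g, coeff_monomial, Fin.val_inj]

noncomputable def quotientEquiv (n k : ℕ) :
    (A2nm1Ring k ⧸ (A2nm1Ring n).comap (A2nm1Ring k).subtype) ≃ₗ[ℂ] (Fin (n - k) → ℂ) :=
  (Submodule.quotEquivOfEq _ _ (ker_coeffDiff_restrict n k).symm).trans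
    ((coeffDiff n k ∘ₗ (A2nm1Ring k).subtype).quotKerEquivOfSurjective
      (coeffDiff_restrict_surjective n k))

end A2nm1

theorem A2nm1_quotient_finrank_general (n k : ℕ) (hk : k ≤ n) :
    FiniteDimensional ℂ
      (↥(A2nm1Module n k) ⧸ Submodule.comap (A2nm1Module n k).subtype (A2nm1Ring n)) ∧
    Module.finrank ℂ
      (↥(A2nm1Module n k) ⧸ Submodule.comap (A2nm1Module n k).subtype (A2nm1Ring n))
        = n - k := by
  rw [A2nm1.module_eq_ring hk]
  exact ⟨Module.Finite.equiv (A2nm1.quotientEquiv n k).symm,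
    by rw [(A2nm1.quotientEquiv n k).finrank_eq, Module.finrank_fin_fun]⟩

/-- For `0 ≤ k ≤ n`, the quotient `M_k / R` is a finite-dimensional ℂ-vector space of
dimension `n − k`. -/
theorem A2nm1_quotient_finrank (n k : ℕ) (hn : 1 ≤ n) (hk : k ≤ n) :
    FiniteDimensional ℂ
      (↥(A2nm1Module n k) ⧸ Submodule.comap (A2nm1Module n k).subtype (A2nm1Ring n)) ∧
    Module.finrank ℂ
      (↥(A2nm1Module n k) ⧸ Submodule.comap (A2nm1Module n k).subtype (A2nm1Ring n))
        = n - k :=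
  A2nm1_quotient_finrank_general n k hk
end

section
/- Let ℂ[[t]] be the ring of formal power series over ℂ, let n ≥ 1 be an integer, let R = {(f, g) ∈ ℂ[[t]] × ℂ[[t]] : the coefficients of t^i in f and in g agree for every i < n}, and for 0 ≤ k ≤ n let M_k = R + R·(t^k, 0) ⊆ ℂ[[t]] × ℂ[[t]]. Then the conductor C(M_k) = {u ∈ ℂ[[t]] × ℂ[[t]] : u·w ∈ M_k for every w ∈ ℂ[[t]] × ℂ[[t]]} equals t^kℂ[[t]] × t^kℂ[[t]], the ideal of ℂ[[t]] × ℂ[[t]] generated by (t^k, t^k), and the quotient (ℂ[[t]] × ℂ[[t]]) / C(M_k) is a ℂ-vector space of dimension 2k. -/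
/-- The conductor `C(M_k) = {u : u·w ∈ M_k for all w}` as a ℂ-subspace. -/
noncomputable def A2nm1Conductor (n k : ℕ) : Submodule ℂ (PowerSeries ℂ × PowerSeries ℂ) where
  carrier := {u : PowerSeries ℂ × PowerSeries ℂ |
    ∀ w : PowerSeries ℂ × PowerSeries ℂ, u * w ∈ A2nm1Module n k}
  add_mem' := by
    intro a b ha hb
    simp only [Set.mem_setOf_eq] at *
    intro w
    rw [add_mul]
    exact (A2nm1Module n k).add_mem (ha w) (hb w)
  zero_mem' := by
    simp only [Set.mem_setOf_eq]
    intro w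
    rw [zero_mul]
    exact (A2nm1Module n k).zero_mem
  smul_mem' := by
    intro c u hu
    simp only [Set.mem_setOf_eq] at *
    intro w
    rw [smul_mul_assoc]
    exact (A2nm1Module n k).smul_mem c (hu w)

namespace PowerSeries

variable (R : Type*) [CommRing R]

noncomputable def initialCoeffs (k : ℕ) : R⟦X⟧ →ₗ[R] Fin k → R :=
  LinearMap.pi fun i => coeff (i : ℕ)

variable {R}

theorem initialCoeffs_eq_zero_iff {k : ℕ} {f : R⟦X⟧} : initialCoeffs R k f = 0 ↔ X ^ k ∣ f := by
  rw [X_pow_dvd_iff, funext_iff]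
  exact ⟨fun h i hi => h ⟨i, hi⟩, fun h i => h i i.2⟩

theorem initialCoeffs_surjective (k : ℕ) : Function.Surjective (initialCoeffs R k) := by
  intro a
  refine ⟨mk fun i => if h : i < k then a ⟨i, h⟩ else 0, funext fun i => ?_⟩
  simp [initialCoeffs, i.2]

end PowerSeries

theorem Ideal.span_singleton_pair {R S : Type*} [CommRing R] [CommRing S] (a : R) (b : S) :
    Ideal.span {(a, b)} = (Ideal.span {a}).prod (Ideal.span {b}) := by
  rw [← Ideal.span_prod (by simp), Set.singleton_prod_singleton]

open PowerSeries

theorem mem_A2nm1Ring_iff {n : ℕ} {u : ℂ⟦X⟧ × ℂ⟦X⟧} :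
    u ∈ A2nm1Ring n ↔ X ^ n ∣ u.1 - u.2 := by
  simp only [X_pow_dvd_iff, map_sub, sub_eq_zero]
  rfl

theorem mem_A2nm1Module_iff {n k : ℕ} (hk : k ≤ n) {u : ℂ⟦X⟧ × ℂ⟦X⟧} :
    u ∈ A2nm1Module n k ↔ X ^ k ∣ u.1 - u.2 := by
  rw [A2nm1Module, Submodule.mem_sup]
  constructor
  · rintro ⟨r, hr, _, ⟨s, -, rfl⟩, rfl⟩
    have hr : X ^ k ∣ r.1 - r.2 := (pow_dvd_pow X hk).trans (mem_A2nm1Ring_iff.mp hr)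
    have hs : X ^ k ∣ s.1 * X ^ k := dvd_mul_left _ _
    simpa [add_sub_right_comm] using dvd_add hr hs
  · rintro ⟨c, hc⟩
    -- `u = (u.2, u.2) + (c, c) * (t ^ k, 0)`, with both summands built from elements of `R`
    refine ⟨(u.2, u.2), mem_A2nm1Ring_iff.mpr (by simp), _,
      ⟨(c, c), mem_A2nm1Ring_iff.mpr (by simp), rfl⟩, Prod.ext ?_ (by simp)⟩
    simp only [LinearMap.mulRight_apply, Prod.fst_add, Prod.fst_mul]
    linear_combination -hc

theorem mem_A2nm1Conductor_iff {n k : ℕ} (hk : k ≤ n) {u : ℂ⟦X⟧ × ℂ⟦X⟧} :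
    u ∈ A2nm1Conductor n k ↔ X ^ k ∣ u.1 ∧ X ^ k ∣ u.2 := by
  show (∀ w, u * w ∈ A2nm1Module n k) ↔ _
  simp_rw [mem_A2nm1Module_iff hk]
  refine ⟨fun h => ⟨by simpa using h (1, 0), by simpa using h (0, 1)⟩, ?_⟩
  rintro ⟨h₁, h₂⟩ w
  exact dvd_sub (h₁.mul_right w.1) (h₂.mul_right w.2)

theorem A2nm1Conductor_eq_ker {n k : ℕ} (hk : k ≤ n) :
    A2nm1Conductor n k = LinearMap.ker ((initialCoeffs ℂ k).prodMap (initialCoeffs ℂ k)) := by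
  ext u
  simp [mem_A2nm1Conductor_iff hk, initialCoeffs_eq_zero_iff]

theorem A2nm1_conductor_eq_general (n k : ℕ) (hk : k ≤ n) :
    (A2nm1Conductor n k : Set (PowerSeries ℂ × PowerSeries ℂ))
        = ((Ideal.span {PowerSeries.X ^ k} : Ideal (PowerSeries ℂ)) : Set (PowerSeries ℂ)) ×ˢ
          ((Ideal.span {PowerSeries.X ^ k} : Ideal (PowerSeries ℂ)) : Set (PowerSeries ℂ)) ∧
    (A2nm1Conductor n k : Set (PowerSeries ℂ × PowerSeries ℂ))
        = ((Ideal.span {((PowerSeries.X ^ k, PowerSeries.X ^ k) :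
              PowerSeries ℂ × PowerSeries ℂ)} : Ideal (PowerSeries ℂ × PowerSeries ℂ)) :
            Set (PowerSeries ℂ × PowerSeries ℂ)) ∧
    FiniteDimensional ℂ ((PowerSeries ℂ × PowerSeries ℂ) ⧸ A2nm1Conductor n k) ∧
    Module.finrank ℂ ((PowerSeries ℂ × PowerSeries ℂ) ⧸ A2nm1Conductor n k) = 2 * k := by
  have hC : (A2nm1Conductor n k : Set (ℂ⟦X⟧ × ℂ⟦X⟧)) =
      ((Ideal.span {X ^ k} : Ideal ℂ⟦X⟧) : Set ℂ⟦X⟧) ×ˢ (Ideal.span {X ^ k} : Ideal ℂ⟦X⟧) := by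
    ext u
    simp [mem_A2nm1Conductor_iff hk, Ideal.mem_span_singleton]
  let e : ((ℂ⟦X⟧ × ℂ⟦X⟧) ⧸ A2nm1Conductor n k) ≃ₗ[ℂ] (Fin k → ℂ) × (Fin k → ℂ) :=
    (Submodule.quotEquivOfEq _ _ (A2nm1Conductor_eq_ker hk)).trans
      (LinearMap.quotKerEquivOfSurjective _
        ((initialCoeffs_surjective k).prodMap (initialCoeffs_surjective k)))
  refine ⟨hC, by rw [hC, Ideal.span_singleton_pair, Ideal.coe_prod], .equiv e.symm, ?_⟩
  rw [e.finrank_eq, Module.finrank_prod, Module.finrank_fin_fun]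
  ring

/-- For `0 ≤ k ≤ n`, the conductor `C(M_k)` equals `t^k ℂ[[t]] × t^k ℂ[[t]]`, the ideal of
`ℂ[[t]] × ℂ[[t]]` generated by `(t^k, t^k)`, and the quotient `(ℂ[[t]] × ℂ[[t]]) / C(M_k)`
has ℂ-dimension `2k`. -/
theorem A2nm1_conductor_eq (n k : ℕ) (hn : 1 ≤ n) (hk : k ≤ n) :
    (A2nm1Conductor n k : Set (PowerSeries ℂ × PowerSeries ℂ))
        = ((Ideal.span {PowerSeries.X ^ k} : Ideal (PowerSeries ℂ)) : Set (PowerSeries ℂ)) ×ˢ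
          ((Ideal.span {PowerSeries.X ^ k} : Ideal (PowerSeries ℂ)) : Set (PowerSeries ℂ)) ∧
    (A2nm1Conductor n k : Set (PowerSeries ℂ × PowerSeries ℂ))
        = ((Ideal.span {((PowerSeries.X ^ k, PowerSeries.X ^ k) :
              PowerSeries ℂ × PowerSeries ℂ)} : Ideal (PowerSeries ℂ × PowerSeries ℂ)) :
            Set (PowerSeries ℂ × PowerSeries ℂ)) ∧
    FiniteDimensional ℂ ((PowerSeries ℂ × PowerSeries ℂ) ⧸ A2nm1Conductor n k) ∧
    Module.finrank ℂ ((PowerSeries ℂ × PowerSeries ℂ) ⧸ A2nm1Conductor n k) = 2 * k :=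
  A2nm1_conductor_eq_general n k hk
end
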